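/- Let G be a group, X ⊆ G a nonempty subset, a ∈ X, and let H be the subgroup generated by {xa⁻¹ : x ∈ X}. Then the smallest coset of G containing X equals Ha. -/

import Mathlib

/-!
`H * {a}` is a coset containing `X`. Conversely, a coset `A` through `a` is a right coset of the
subgroup `A * {a⁻¹}`; if `A ⊇ X`, this subgroup contains the generators `x * a⁻¹` of `H`.
-/

open Pointwise

/-- A coset of a group `G` is a subset closed under `(x, y, z) ↦ x * y⁻¹ * z`. -/
def IsCoset {G : Type*} [Group G] (A : Set G) : Prop := A * A⁻¹ * A ⊆ A

/-- The smallest coset containing a given subset. -/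
def cosetClosure {G : Type*} [Group G] (X : Set G) : Set G :=
  ⋂₀ {A : Set G | IsCoset A ∧ X ⊆ A}

theorem isCoset_iff {G : Type*} [Group G] {A : Set G} :
    IsCoset A ↔ ∀ p ∈ A, ∀ q ∈ A, ∀ r ∈ A, p * q⁻¹ * r ∈ A := by
  simp only [IsCoset, ← Set.image2_mul, Set.image2_subset_iff, Set.forall_mem_image2, Set.mem_inv,
    Set.forall_inv_mem]

namespace IsCoset

variable {G : Type*} [Group G] {A : Set G}

theorem mul_inv_mul_mem (hA : IsCoset A) {p q r : G} (hp : p ∈ A) (hq : q ∈ A) (hr : r ∈ A) :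
    p * q⁻¹ * r ∈ A :=
  isCoset_iff.mp hA p hp q hq r hr

/-- The subgroup `A * {a⁻¹}`, of which `A` is the right coset through `a`. -/
def subgroupMulInv (hA : IsCoset A) {a : G} (ha : a ∈ A) : Subgroup G where
  carrier := {g | g * a ∈ A}
  one_mem' := by simpa using ha
  mul_mem' {x y} hx hy := by
    simpa [mul_assoc] using hA.mul_inv_mul_mem hx ha hy
  inv_mem' {x} hx := by
    simpa [mul_assoc] using hA.mul_inv_mul_mem ha hx ha

theorem mem_subgroupMulInv (hA : IsCoset A) {a : G} (ha : a ∈ A) {g : G} :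
    g ∈ hA.subgroupMulInv ha ↔ g * a ∈ A :=
  Iff.rfl

end IsCoset

theorem Subgroup.isCoset_mul_singleton {G : Type*} [Group G] (H : Subgroup G) (a : G) :
    IsCoset ((H : Set G) * {a}) := by
  rw [isCoset_iff, Set.mul_singleton]
  rintro _ ⟨h₁, hh₁, rfl⟩ _ ⟨h₂, hh₂, rfl⟩ _ ⟨h₃, hh₃, rfl⟩
  exact ⟨h₁ * h₂⁻¹ * h₃, mul_mem (mul_mem hh₁ (inv_mem hh₂)) hh₃, by group⟩

theorem cosetClosure_subset {G : Type*} [Group G] {X A : Set G} (hA : IsCoset A) (hXA : X ⊆ A) :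
    cosetClosure X ⊆ A :=
  Set.sInter_subset_of_mem ⟨hA, hXA⟩

theorem subset_cosetClosure {G : Type*} [Group G] {X B : Set G}
    (h : ∀ A, IsCoset A → X ⊆ A → B ⊆ A) : B ⊆ cosetClosure X :=
  Set.subset_sInter fun A ⟨hA, hXA⟩ => h A hA hXA

theorem cosetClosure_eq_closure_mul {G : Type*} [Group G] (X : Set G)
    (a : G) (ha : a ∈ X) :
    cosetClosure X = (Subgroup.closure ((fun x => x * a⁻¹) '' X) : Set G) * {a} := by
  set H := Subgroup.closure ((fun x => x * a⁻¹) '' X)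
  apply subset_antisymm
  · refine cosetClosure_subset (H.isCoset_mul_singleton a) fun x hx => ?_
    exact ⟨x * a⁻¹, Subgroup.subset_closure ⟨x, hx, rfl⟩, a, rfl, inv_mul_cancel_right x a⟩
  · refine subset_cosetClosure fun A hA hXA => ?_
    have hH : H ≤ hA.subgroupMulInv (hXA ha) := by
      rw [Subgroup.closure_le]
      rintro _ ⟨x, hx, rfl⟩
      exact (hA.mem_subgroupMulInv _).mpr (by simpa using hXA hx)
    rintro _ ⟨h, hh, _, rfl, rfl⟩
    exact hH hh
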